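/- arXiv:1401.8243 — 4 statements merged into one kernel-verified Lean document; each statement's English description precedes it below -/
import Mathlib

section
/- Let d_A, d_B be positive natural numbers, let {v_i} be an orthonormal basis of ℂ^{d_A}, let λ_1, …, λ_{d_A} be pairwise distinct complex numbers of modulus 1, and set U = Σ_i λ_i (v_i v_iᴴ) (a unitary matrix with fully nondegenerate spectrum). If ρ is a positive semidefinite (d_A·d_B) × (d_A·d_B) complex matrix satisfying (U ⊗ₖ I_{d_B}) ρ = ρ (U ⊗ₖ I_{d_B}), then there exist positive semidefinite d_B × d_B matrices L_i such that ρ = Σ_i (v_i v_iᴴ) ⊗ₖ L_i; in particular, if ρ is a density matrix it is classical-quantum. -/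
open Matrix Kronecker
open scoped ComplexOrder

/-!
The rank-one projections `P i = v i (v i)ᴴ` form a complete family of orthogonal idempotents,
and so do the `P i ⊗ₖ 1`, in terms of which `U ⊗ₖ 1 = ∑ i, lam i • (P i ⊗ₖ 1)`. Sandwiching
the commutation relation between `P i ⊗ₖ 1` and `P j ⊗ₖ 1` gives
`(lam i - lam j) • (P i ⊗ₖ 1) * ρ * (P j ⊗ₖ 1) = 0`, so distinct eigenvalues make `ρ` block
diagonal. Each diagonal block is `P i ⊗ₖ L i` with `L i = Kᴴ * ρ * K` for the isometry
`K = v i ⊗ₖ 1`, which is positive semidefinite together with `ρ`.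
-/

section OrthogonalIdempotents

variable {K A ι : Type*} [Fintype ι] {e : ι → A}

section Semiring

variable [CommSemiring K] [Semiring A] [Algebra K A]

theorem OrthogonalIdempotents.mul_sum_smul (he : OrthogonalIdempotents e) (lam : ι → K) (i : ι) :
    e i * ∑ j, lam j • e j = lam i • e i := by
  classical
  simp [Finset.mul_sum, he.mul_eq]

theorem OrthogonalIdempotents.sum_smul_mul (he : OrthogonalIdempotents e) (lam : ι → K) (i : ι) :
    (∑ j, lam j • e j) * e i = lam i • e i := by
  classical
  simp [Finset.sum_mul, he.mul_eq]

end Semiring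

variable [Field K] [Ring A] [Algebra K A]

theorem mul_mul_eq_zero_of_commute {U X P Q : A} {a b : K} (hab : a ≠ b) (hUX : Commute U X)
    (hP : P * U = a • P) (hQ : U * Q = b • Q) : P * X * Q = 0 := by
  have h : a • (P * X * Q) = b • (P * X * Q) := by
    calc a • (P * X * Q) = P * U * X * Q := by rw [hP, smul_mul_assoc, smul_mul_assoc]
      _ = P * X * (U * Q) := by rw [mul_assoc P, hUX.eq, ← mul_assoc, mul_assoc _ U]
      _ = b • (P * X * Q) := by rw [hQ, mul_smul_comm]
  have h0 : (a - b) • (P * X * Q) = 0 := by rw [sub_smul, h, sub_self]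
  exact (smul_eq_zero.mp h0).resolve_left (sub_ne_zero.mpr hab)

theorem CompleteOrthogonalIdempotents.eq_sum_mul_mul_of_commute
    (he : CompleteOrthogonalIdempotents e) {lam : ι → K} (hlam : Function.Injective lam) {X : A}
    (hX : Commute (∑ i, lam i • e i) X) : X = ∑ i, e i * X * e i := by
  have hoff : ∀ i j, i ≠ j → e i * X * e j = 0 := fun i j hij =>
    mul_mul_eq_zero_of_commute (hlam.ne hij) hX (he.mul_sum_smul lam i)
      (he.sum_smul_mul lam j)
  calc X = (∑ i, e i) * X * ∑ j, e j := by rw [he.complete, one_mul, mul_one]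
    _ = ∑ i, ∑ j, e i * X * e j := by rw [Finset.sum_mul, Finset.sum_mul_sum]
    _ = ∑ i, e i * X * e i := by
      refine Finset.sum_congr rfl fun i _ => Fintype.sum_eq_single i fun j hj => hoff i j hj.symm

end OrthogonalIdempotents

namespace Matrix

theorem completeOrthogonalIdempotents_vecMulVec_star {n R : Type*} [Fintype n] [DecidableEq n]
    [CommRing R] [StarRing R] {v : n → n → R}
    (hv : ∀ i j, star (v i) ⬝ᵥ v j = if i = j then 1 else 0) :
    CompleteOrthogonalIdempotents fun i => vecMulVec (v i) (star (v i)) := by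
  refine ⟨OrthogonalIdempotents.iff_mul_eq.mpr fun i j => ?_, ?_⟩
  · rw [vecMulVec_mul_vecMulVec, hv]
    split_ifs with h
    · rw [h, one_smul]
    · rw [zero_smul, vecMulVec_zero]
  · -- `hv` says `Wᴴ * W = 1` for the square matrix `W` with columns `v i`; hence `W * Wᴴ = 1`.
    set W := (of v)ᵀ
    have hW : Wᴴ * W = 1 := by
      ext i j
      simpa [W, mul_apply, dotProduct, one_apply] using hv i j
    have hW' : W * Wᴴ = 1 := mul_eq_one_comm.mp hW
    ext x y
    simpa [W, mul_apply, sum_apply, vecMulVec_apply] using congr_fun₂ hW' x y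

variable {n m R : Type*} [Fintype m] [DecidableEq m] [CommSemiring R]

def kroneckerOneAlgHom [Fintype n] [DecidableEq n] :
    Matrix n n R →ₐ[R] Matrix (n × m) (n × m) R where
  toFun A := A ⊗ₖ 1
  map_one' := one_kronecker_one
  map_mul' A B := by rw [← mul_kronecker_mul, mul_one]
  map_zero' := zero_kronecker _
  map_add' A B := add_kronecker A B 1
  commutes' r := by simp [Algebra.algebraMap_eq_smul_one, smul_kronecker]

variable [StarRing R]

variable (m) in
/-- The matrix of `b ↦ u ⊗ eᵦ`, i.e. `u ⊗ₖ 1` with the column index `Unit × m` replaced by `m`. -/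
def vecKroneckerOne (u : n → R) : Matrix (n × m) m R :=
  Matrix.of fun p b => u p.1 * (1 : Matrix m m R) p.2 b

theorem vecKroneckerOne_mul_mul_conjTranspose (u : n → R) (L : Matrix m m R) :
    vecKroneckerOne m u * L * (vecKroneckerOne m u)ᴴ = vecMulVec u (star u) ⊗ₖ L := by
  ext ⟨x, a⟩ ⟨y, b⟩
  simp [mul_apply, vecKroneckerOne, one_apply, apply_ite star, vecMulVec_apply]
  ring

theorem vecMulVec_star_kronecker_one_mul_mul [Fintype n] (u : n → R)
    (ρ : Matrix (n × m) (n × m) R) :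
    (vecMulVec u (star u) ⊗ₖ 1) * ρ * (vecMulVec u (star u) ⊗ₖ 1) =
      vecMulVec u (star u) ⊗ₖ ((vecKroneckerOne m u)ᴴ * ρ * vecKroneckerOne m u) := by
  have hK := vecKroneckerOne_mul_mul_conjTranspose u (1 : Matrix m m R)
  rw [Matrix.mul_one] at hK
  rw [← hK, ← vecKroneckerOne_mul_mul_conjTranspose]
  simp only [Matrix.mul_assoc]

end Matrix

theorem commutes_with_nondegenerate_local_unitary_implies_classicalQuantum_general
    (dA dB : ℕ)
    (v : Fin dA → Fin dA → ℂ)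
    (hv : ∀ i j, star (v i) ⬝ᵥ v j = if i = j then 1 else 0)
    (lam : Fin dA → ℂ)
    (hdist : Function.Injective lam)
    (U : Matrix (Fin dA) (Fin dA) ℂ)
    (hU : U = ∑ i, lam i • Matrix.vecMulVec (v i) (star (v i)))
    (ρ : Matrix (Fin dA × Fin dB) (Fin dA × Fin dB) ℂ)
    (hρ : ρ.PosSemidef)
    (hcomm : (U ⊗ₖ (1 : Matrix (Fin dB) (Fin dB) ℂ)) * ρ
      = ρ * (U ⊗ₖ (1 : Matrix (Fin dB) (Fin dB) ℂ))) :
    ∃ L : Fin dA → Matrix (Fin dB) (Fin dB) ℂ,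
      (∀ i, (L i).PosSemidef) ∧
      ρ = ∑ i, Matrix.vecMulVec (v i) (star (v i)) ⊗ₖ L i := by
  let f : Matrix (Fin dA) (Fin dA) ℂ →ₐ[ℂ] _ := kroneckerOneAlgHom (m := Fin dB)
  have hQ := (completeOrthogonalIdempotents_vecMulVec_star hv).map f.toRingHom
  have hUQ : f U = ∑ i, lam i • f (vecMulVec (v i) (star (v i))) := by
    simp only [hU, map_sum, map_smul]
  refine ⟨fun i => (vecKroneckerOne (Fin dB) (v i))ᴴ * ρ * vecKroneckerOne (Fin dB) (v i),
    fun i => hρ.conjTranspose_mul_mul_same _, ?_⟩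
  calc ρ = ∑ i, f (vecMulVec (v i) (star (v i))) * ρ * f (vecMulVec (v i) (star (v i))) :=
        hQ.eq_sum_mul_mul_of_commute hdist (hUQ ▸ hcomm)
    _ = _ := Finset.sum_congr rfl fun i _ => vecMulVec_star_kronecker_one_mul_mul (v i) ρ

theorem commutes_with_nondegenerate_local_unitary_implies_classicalQuantum
    (dA dB : ℕ) (hdA : 0 < dA) (hdB : 0 < dB)
    (v : Fin dA → Fin dA → ℂ)
    (hv : ∀ i j, star (v i) ⬝ᵥ v j = if i = j then 1 else 0)
    (lam : Fin dA → ℂ) (hmod : ∀ i, ‖lam i‖ = 1)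
    (hdist : Function.Injective lam)
    (U : Matrix (Fin dA) (Fin dA) ℂ)
    (hU : U = ∑ i, lam i • Matrix.vecMulVec (v i) (star (v i)))
    (ρ : Matrix (Fin dA × Fin dB) (Fin dA × Fin dB) ℂ)
    (hρ : ρ.PosSemidef)
    (hcomm : (U ⊗ₖ (1 : Matrix (Fin dB) (Fin dB) ℂ)) * ρ
      = ρ * (U ⊗ₖ (1 : Matrix (Fin dB) (Fin dB) ℂ))) :
    ∃ L : Fin dA → Matrix (Fin dB) (Fin dB) ℂ,
      (∀ i, (L i).PosSemidef) ∧
      ρ = ∑ i, Matrix.vecMulVec (v i) (star (v i)) ⊗ₖ L i :=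
  commutes_with_nondegenerate_local_unitary_implies_classicalQuantum_general dA dB v hv lam hdist U
    hU ρ hρ hcomm
end

section
/- Let d be a positive natural number and let ρ be a density matrix on ℂ² ⊗ ℂ^d. Then there exists a traceless 2 × 2 unitary matrix U with (U ⊗ₖ I_d) ρ (U ⊗ₖ I_d)ᴴ = ρ if and only if ρ is classical-quantum. -/
open Matrix Kronecker
open scoped ComplexOrder

/-- A density matrix on `ℂ² ⊗ ℂ^d` is classical-quantum if it is of the form
`Σ_i (v_i v_iᴴ) ⊗ₖ L_i` for an orthonormal basis `v` of `ℂ²` and PSD matrices `L_i`. -/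
def IsClassicalQuantum (d : ℕ) (ρ : Matrix (Fin 2 × Fin d) (Fin 2 × Fin d) ℂ) : Prop :=
  ∃ (v : Fin 2 → Fin 2 → ℂ) (L : Fin 2 → Matrix (Fin d) (Fin d) ℂ),
    (∀ i j, star (v i) ⬝ᵥ v j = if i = j then 1 else 0) ∧
    (∀ i, (L i).PosSemidef) ∧
    ρ = ∑ i, Matrix.vecMulVec (v i) (star (v i)) ⊗ₖ L i

/-!
A unitary `U` with `tr U = 0` is, up to a phase `c`, a Hermitian involution `V = c • U`, and
`U ⊗ₖ 1` fixes `ρ` exactly when `V ⊗ₖ 1` commutes with `ρ`. Since `tr V = 0`, the eigenvalues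
of `V` are `1` and `-1`, so in an eigenbasis `W` of `V` the commutation says that
`(W ⊗ₖ 1)ᴴ ρ (W ⊗ₖ 1)` is block diagonal; its diagonal blocks are the matrices `L_i`, and the
columns of `W` are the `v_i`. Conversely, for a classical-quantum `ρ` the reflection
`W diag(1, -1) Wᴴ` works.
-/

section Unitary

variable {R : Type*} [Monoid R] [StarMul R] {u a b : R}

theorem star_mul_conj_mul_of_mem_unitary (hu : u ∈ unitary R) :
    star u * (u * a * star u) * u = a := by
  simp only [← mul_assoc, Unitary.star_mul_self_of_mem hu, one_mul]
  simp only [mul_assoc, Unitary.star_mul_self_of_mem hu, mul_one]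

theorem conj_star_mul_conj_of_mem_unitary (hu : u ∈ unitary R) :
    u * (star u * a * u) * star u = a := by
  simpa only [star_star] using star_mul_conj_mul_of_mem_unitary (a := a) (Unitary.star_mem hu)

theorem commute_conj_iff_of_mem_unitary (hu : u ∈ unitary R) :
    Commute (u * a * star u) b ↔ Commute a (star u * b * u) := by
  have hsu := Unitary.star_mul_self_of_mem hu
  have hus := Unitary.mul_star_self_of_mem hu
  constructor <;> intro h
  · calc a * (star u * b * u) = star u * (u * a * star u * b) * u := by
          simp only [← mul_assoc, hsu, one_mul]
      _ = star u * (b * (u * a * star u)) * u := by rw [h.eq]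
      _ = star u * b * u * a := by simp only [mul_assoc, hsu, mul_one]
  · calc u * a * star u * b = u * (a * (star u * b * u)) * star u := by
          simp only [mul_assoc, hus, mul_one]
      _ = u * ((star u * b * u) * a) * star u := by rw [h.eq]
      _ = b * (u * a * star u) := by simp only [← mul_assoc, hus, one_mul]

theorem IsSelfAdjoint.of_mem_unitary_of_mul_self_eq_one (hu : u ∈ unitary R) (h : u * u = 1) :
    IsSelfAdjoint u :=
  calc star u = star u * (u * u) := by rw [h, mul_one]
    _ = u := by rw [← mul_assoc, Unitary.star_mul_self_of_mem hu, one_mul]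

end Unitary

namespace Matrix

variable {m n R : Type*}

/-- Unlike `Matrix.blockDiagonal`, the block index is the first coordinate, matching `ℂ² ⊗ ℂ^d`. -/
def IsBlockDiag [Zero R] (A : Matrix (m × n) (m × n) R) : Prop :=
  ∀ ⦃i j : m⦄, i ≠ j → ∀ k l, A (i, k) (j, l) = 0

variable [Fintype m]

theorem kronecker_one_mul_mul_star [Fintype n] [DecidableEq n] [CommSemiring R] [StarRing R]
    (A B : Matrix m m R) (L : Matrix n n R) :
    (A ⊗ₖ 1) * (B ⊗ₖ L) * star (A ⊗ₖ 1) = (A * B * star A) ⊗ₖ L := by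
  rw [star_eq_conjTranspose, conjTranspose_kronecker, conjTranspose_one, ← mul_kronecker_mul,
    ← mul_kronecker_mul, one_mul, mul_one, star_eq_conjTranspose]

variable [DecidableEq m]

theorem sum_single_kronecker_apply [Semiring R] (L : m → Matrix n n R) (i j : m) (k l : n) :
    (∑ c, single c c 1 ⊗ₖ L c) (i, k) (j, l) = if i = j then L i k l else 0 := by
  by_cases hij : i = j
  · subst hij
    simp [sum_apply, single_apply]
  · simp only [sum_apply, kroneckerMap_apply, single_apply, if_neg hij]
    refine Finset.sum_eq_zero fun c _ => ?_
    rw [if_neg (by rintro ⟨rfl, rfl⟩; exact hij rfl), zero_mul]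

theorem IsBlockDiag.eq_sum_single_kronecker [Semiring R] {A : Matrix (m × n) (m × n) R}
    (hA : A.IsBlockDiag) :
    A = ∑ i, single i i 1 ⊗ₖ A.submatrix (Prod.mk i) (Prod.mk i) := by
  ext ⟨i, k⟩ ⟨j, l⟩
  rw [sum_single_kronecker_apply]
  split_ifs with hij
  · subst hij; rfl
  · exact hA hij k l

theorem isBlockDiag_sum_single_kronecker [Semiring R] (L : m → Matrix n n R) :
    (∑ i, single i i 1 ⊗ₖ L i).IsBlockDiag := fun i j hij k l => by
  rw [sum_single_kronecker_apply, if_neg hij]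

theorem commute_diagonal_kronecker_one_iff [Fintype n] [DecidableEq n] [CommRing R]
    [NoZeroDivisors R] {μ : m → R} (hμ : Function.Injective μ) {A : Matrix (m × n) (m × n) R} :
    Commute (diagonal μ ⊗ₖ 1) A ↔ A.IsBlockDiag := by
  rw [← diagonal_one, diagonal_kronecker_diagonal, commute_iff_eq]
  constructor
  · intro h i j hij k l
    have hentry := congr_fun₂ h (i, k) (j, l)
    simp only [diagonal_mul, mul_diagonal, mul_one] at hentry
    have : (μ i - μ j) * A (i, k) (j, l) = 0 := by rw [sub_mul, hentry, mul_comm, sub_self]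
    exact (mul_eq_zero.1 this).resolve_left (sub_ne_zero.2 (hμ.ne hij))
  · intro hA
    ext ⟨i, k⟩ ⟨j, l⟩
    simp only [diagonal_mul, mul_diagonal, mul_one]
    by_cases hij : i = j
    · rw [hij, mul_comm]
    · rw [hA hij, mul_zero, zero_mul]

theorem mul_single_mul_star [CommSemiring R] [StarRing R] (A : Matrix m m R) (i : m) :
    A * single i i 1 * star A = vecMulVec (Aᵀ i) (star (Aᵀ i)) := by
  ext p q
  simp [mul_apply, single_apply, vecMulVec_apply, ite_and]

theorem kronecker_one_mul_sum_single_kronecker_mul_star [Fintype n] [DecidableEq n]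
    [CommSemiring R] [StarRing R] (A : Matrix m m R) (L : m → Matrix n n R) :
    (A ⊗ₖ 1) * (∑ i, single i i 1 ⊗ₖ L i) * star (A ⊗ₖ 1) =
      ∑ i, vecMulVec (Aᵀ i) (star (Aᵀ i)) ⊗ₖ L i := by
  simp only [Finset.mul_sum, Finset.sum_mul, kronecker_one_mul_mul_star, mul_single_mul_star]

theorem mem_unitary_iff_transpose_orthonormal [CommRing R] [StarRing R] {A : Matrix m m R} :
    A ∈ unitary (Matrix m m R) ↔ ∀ i j, star (Aᵀ i) ⬝ᵥ Aᵀ j = if i = j then 1 else 0 := by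
  show A ∈ unitaryGroup m R ↔ _
  rw [mem_unitaryGroup_iff', ← Matrix.ext_iff]
  rfl

theorem mul_self_eq_neg_det_smul_one_of_trace_eq_zero [CommRing R]
    {A : Matrix (Fin 2) (Fin 2) R} (h : A.trace = 0) : A * A = -A.det • 1 := by
  have h11 : A 1 1 = -A 0 0 := eq_neg_of_add_eq_zero_right (by rwa [trace_fin_two] at h)
  ext i j
  fin_cases i <;> fin_cases j <;> simp [mul_apply, det_fin_two, h11] <;> ring

end Matrix

theorem Fin.injective_two_of_ne {α : Type*} {f : Fin 2 → α} (h : f 0 ≠ f 1) :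
    Function.Injective f := by
  intro i j hij
  fin_cases i <;> fin_cases j
  exacts [rfl, absurd hij h, absurd hij.symm h, rfl]

theorem Complex.mem_unitary_of_pow_mem_unitary {c : ℂ} {n : ℕ} (hn : n ≠ 0)
    (hc : c ^ n ∈ unitary ℂ) : c ∈ unitary ℂ := by
  have hpow : ‖c‖ ^ n = 1 := by rw [← norm_pow, CStarRing.norm_of_mem_unitary hc]
  have hnorm : ‖c‖ = 1 := (pow_eq_one_iff_of_nonneg (norm_nonneg c) hn).1 hpow
  rw [Unitary.mem_iff_star_mul_self, RCLike.star_def, RCLike.conj_mul, hnorm]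
  simp

theorem exists_smul_mem_unitary_mul_self_eq_one {U : Matrix (Fin 2) (Fin 2) ℂ}
    (hU : U ∈ unitary (Matrix (Fin 2) (Fin 2) ℂ)) (htr : U.trace = 0) :
    ∃ c : ℂ, c • U ∈ unitary (Matrix (Fin 2) (Fin 2) ℂ) ∧ c • U * (c • U) = 1 := by
  have hdet : U.det ∈ unitary ℂ := det_of_mem_unitary hU
  -- `U * U = -det U • 1`, so `c` is a square root of `(-det U)⁻¹ = -star (det U)`.
  obtain ⟨c, hc⟩ := IsAlgClosed.exists_pow_nat_eq (-star U.det) two_pos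
  have hcu : c ∈ unitary ℂ := Complex.mem_unitary_of_pow_mem_unitary two_ne_zero
    (hc ▸ (-⟨star U.det, Unitary.star_mem hdet⟩ : unitary ℂ).prop)
  refine ⟨c, Unitary.smul_mem_of_mem hcu hU, ?_⟩
  rw [smul_mul_smul_comm, mul_self_eq_neg_det_smul_one_of_trace_eq_zero htr, smul_smul, ← sq, hc,
    neg_mul_neg, Unitary.star_mul_self_of_mem hdet, one_smul]

theorem Matrix.IsHermitian.exists_unitary_diagonal_injective {V : Matrix (Fin 2) (Fin 2) ℂ}
    (hV : V.IsHermitian) (hdet : V.det ≠ 0) (htr : V.trace = 0) :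
    ∃ W ∈ unitary (Matrix (Fin 2) (Fin 2) ℂ), ∃ μ : Fin 2 → ℂ,
      Function.Injective μ ∧ V = W * diagonal μ * star W := by
  have hne : hV.eigenvalues 0 ≠ hV.eigenvalues 1 := by
    intro h
    rw [hV.trace_eq_sum_eigenvalues, Fin.sum_univ_two, h] at htr
    rw [hV.det_eq_prod_eigenvalues, Fin.prod_univ_two, h] at hdet
    exact hdet (mul_self_eq_zero.2 (by linear_combination htr / 2))
  exact ⟨hV.eigenvectorUnitary, hV.eigenvectorUnitary.prop, _,
    RCLike.ofReal_injective.comp (Fin.injective_two_of_ne hne), hV.spectral_theorem⟩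

theorem isClassicalQuantum_iff_exists_unitary_isBlockDiag {d : ℕ}
    {ρ : Matrix (Fin 2 × Fin d) (Fin 2 × Fin d) ℂ} (hρ : ρ.PosSemidef) :
    IsClassicalQuantum d ρ ↔ ∃ W ∈ unitary (Matrix (Fin 2) (Fin 2) ℂ),
      (star (W ⊗ₖ (1 : Matrix (Fin d) (Fin d) ℂ)) * ρ * (W ⊗ₖ 1)).IsBlockDiag := by
  constructor
  · rintro ⟨v, L, hv, -, rfl⟩
    obtain ⟨W, rfl⟩ : ∃ W : Matrix (Fin 2) (Fin 2) ℂ, v = Wᵀ := ⟨(of v)ᵀ, rfl⟩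
    have hW := mem_unitary_iff_transpose_orthonormal.2 hv
    refine ⟨W, hW, ?_⟩
    rw [← kronecker_one_mul_sum_single_kronecker_mul_star,
      star_mul_conj_mul_of_mem_unitary (kronecker_mem_unitary hW (one_mem _))]
    exact isBlockDiag_sum_single_kronecker L
  · rintro ⟨W, hW, hblock⟩
    set X := W ⊗ₖ (1 : Matrix (Fin d) (Fin d) ℂ)
    have hρ' : (star X * ρ * X).PosSemidef := hρ.conjTranspose_mul_mul_same X
    refine ⟨Wᵀ, fun i => (star X * ρ * X).submatrix (Prod.mk i) (Prod.mk i),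
      mem_unitary_iff_transpose_orthonormal.1 hW, fun i => hρ'.submatrix _, ?_⟩
    rw [← kronecker_one_mul_sum_single_kronecker_mul_star, ← hblock.eq_sum_single_kronecker,
      conj_star_mul_conj_of_mem_unitary (kronecker_mem_unitary hW (one_mem _))]

section LocalReflection

variable {n : Type*} [Fintype n] [DecidableEq n] {ρ : Matrix (Fin 2 × n) (Fin 2 × n) ℂ}

theorem exists_unitary_isBlockDiag_of_commute {U : Matrix (Fin 2) (Fin 2) ℂ}
    (hU : U ∈ unitary _) (htr : U.trace = 0) (hcomm : Commute (U ⊗ₖ (1 : Matrix n n ℂ)) ρ) :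
    ∃ W ∈ unitary (Matrix (Fin 2) (Fin 2) ℂ),
      (star (W ⊗ₖ (1 : Matrix n n ℂ)) * ρ * (W ⊗ₖ 1)).IsBlockDiag := by
  obtain ⟨c, hcU, hcUU⟩ := exists_smul_mem_unitary_mul_self_eq_one hU htr
  obtain ⟨W, hW, μ, hμ, hV⟩ :=
    (IsSelfAdjoint.of_mem_unitary_of_mul_self_eq_one hcU hcUU).isHermitian
      |>.exists_unitary_diagonal_injective (isUnit_det_of_left_inverse hcUU).ne_zero
        (by rw [trace_smul, htr, smul_zero])
  refine ⟨W, hW, (commute_diagonal_kronecker_one_iff hμ).1 ?_⟩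
  rw [← commute_conj_iff_of_mem_unitary (kronecker_mem_unitary hW (one_mem _)),
    kronecker_one_mul_mul_star, ← hV, smul_kronecker]
  exact hcomm.smul_left c

theorem exists_unitary_trace_eq_zero_commute_of_isBlockDiag {W : Matrix (Fin 2) (Fin 2) ℂ}
    (hW : W ∈ unitary _) (hblock : (star (W ⊗ₖ (1 : Matrix n n ℂ)) * ρ * (W ⊗ₖ 1)).IsBlockDiag) :
    ∃ U ∈ unitary (Matrix (Fin 2) (Fin 2) ℂ), U.trace = 0 ∧
      Commute (U ⊗ₖ (1 : Matrix n n ℂ)) ρ := by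
  have hμ : Function.Injective ![(1 : ℂ), -1] := Fin.injective_two_of_ne (by norm_num)
  have hD : diagonal ![(1 : ℂ), -1] ∈ unitary _ := by
    rw [Unitary.mem_iff]
    simp only [star_eq_conjTranspose, diagonal_conjTranspose, diagonal_mul_diagonal,
      ← diagonal_one, diagonal_eq_diagonal_iff]
    constructor <;> intro i <;> fin_cases i <;> simp
  refine ⟨W * diagonal ![1, -1] * star W, mul_mem (mul_mem hW hD) (Unitary.star_mem hW), ?_, ?_⟩
  · rw [trace_mul_cycle, Unitary.star_mul_self_of_mem hW, one_mul]
    simp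
  · rw [← kronecker_one_mul_mul_star,
      commute_conj_iff_of_mem_unitary (kronecker_mem_unitary hW (one_mem _))]
    exact (commute_diagonal_kronecker_one_iff hμ).2 hblock

end LocalReflection

theorem invariant_under_traceless_local_unitary_iff_classicalQuantum_general
    (d : ℕ)
    (ρ : Matrix (Fin 2 × Fin d) (Fin 2 × Fin d) ℂ)
    (hρ : ρ.PosSemidef) :
    (∃ U : Matrix (Fin 2) (Fin 2) ℂ, Uᴴ * U = 1 ∧ U.trace = 0 ∧
        (U ⊗ₖ (1 : Matrix (Fin d) (Fin d) ℂ)) * ρ * (U ⊗ₖ (1 : Matrix (Fin d) (Fin d) ℂ))ᴴ = ρ)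
      ↔ IsClassicalQuantum d ρ := by
  have hX {U : Matrix (Fin 2) (Fin 2) ℂ} (hU : U ∈ unitary _) :
      U ⊗ₖ (1 : Matrix (Fin d) (Fin d) ℂ) ∈ unitary _ := kronecker_mem_unitary hU (one_mem _)
  rw [isClassicalQuantum_iff_exists_unitary_isBlockDiag hρ]
  constructor
  · rintro ⟨U, hU, htrU, hinv⟩
    have hU : U ∈ unitary _ := mem_unitaryGroup_iff'.2 hU
    exact exists_unitary_isBlockDiag_of_commute hU htrU
      ((commute_unitary_iff_star_right_conjugate (hX hU)).2 hinv)
  · rintro ⟨W, hW, hblock⟩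
    obtain ⟨U, hU, htrU, hcomm⟩ := exists_unitary_trace_eq_zero_commute_of_isBlockDiag hW hblock
    exact ⟨U, Unitary.star_mul_self_of_mem hU, htrU,
      (commute_unitary_iff_star_right_conjugate (hX hU)).1 hcomm⟩

theorem invariant_under_traceless_local_unitary_iff_classicalQuantum
    (d : ℕ) (hd : 0 < d)
    (ρ : Matrix (Fin 2 × Fin d) (Fin 2 × Fin d) ℂ)
    (hρ : ρ.PosSemidef) (htr : ρ.trace = 1) :
    (∃ U : Matrix (Fin 2) (Fin 2) ℂ, Uᴴ * U = 1 ∧ U.trace = 0 ∧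
        (U ⊗ₖ (1 : Matrix (Fin d) (Fin d) ℂ)) * ρ * (U ⊗ₖ (1 : Matrix (Fin d) (Fin d) ℂ))ᴴ = ρ)
      ↔ IsClassicalQuantum d ρ :=
  invariant_under_traceless_local_unitary_iff_classicalQuantum_general d ρ hρ
end

section
/- Let γ = (γ_1, γ_2, γ_3, γ_4) with γ_i ≥ 0 and γ_1 + γ_2 + γ_3 + γ_4 = 1, let ρ_γ be the associated Bell-diagonal two-qubit state, and let σ_z = diag(1, −1). Then √F(ρ_γ, (σ_z ⊗ₖ I_2) ρ_γ (σ_z ⊗ₖ I_2)) = 2(√(γ_1 γ_2) + √(γ_3 γ_4)). -/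
open Matrix Kronecker
open scoped ComplexOrder

open scoped Classical in
/-- The positive semidefinite square root of a matrix (junk value `0` if not PSD). -/
noncomputable def msqrt {n : Type*} [Fintype n] [DecidableEq n] (A : Matrix n n ℂ) : Matrix n n ℂ :=
  if h : A.PosSemidef then
    (h.1.eigenvectorUnitary : Matrix n n ℂ) * diagonal (((↑) : ℝ → ℂ) ∘ Real.sqrt ∘ h.1.eigenvalues) *
      (star h.1.eigenvectorUnitary : Matrix n n ℂ)
  else 0

/-- Square-root fidelity `tr √(√ρ · σ · √ρ)` (as a real number). -/
noncomputable def sqrtFid {n : Type*} [Fintype n] [DecidableEq n] (ρ σ : Matrix n n ℂ) : ℝ :=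
  ((msqrt (msqrt ρ * σ * msqrt ρ)).trace).re

/-- Trace norm `tr √(Xᴴ X)` (as a real number). -/
noncomputable def traceNorm {n : Type*} [Fintype n] [DecidableEq n] (X : Matrix n n ℂ) : ℝ :=
  ((msqrt (Xᴴ * X)).trace).re

/-- The Bell-diagonal two-qubit state with Bell-basis eigenvalues `γ₁, γ₂, γ₃, γ₄`. -/
noncomputable def bellDiag (γ₁ γ₂ γ₃ γ₄ : ℝ) :
    Matrix (Fin 2 × Fin 2) (Fin 2 × Fin 2) ℂ :=
  Matrix.reindex finProdFinEquiv.symm finProdFinEquiv.symm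
    ((1 / 2 : ℂ) • !![(γ₁ : ℂ) + γ₂, 0, 0, (γ₁ : ℂ) - γ₂;
        0, (γ₃ : ℂ) + γ₄, (γ₃ : ℂ) - γ₄, 0;
        0, (γ₃ : ℂ) - γ₄, (γ₃ : ℂ) + γ₄, 0;
        (γ₁ : ℂ) - γ₂, 0, 0, (γ₁ : ℂ) + γ₂])

/-!
Every Bell-diagonal matrix is diagonal in the (fixed) Bell basis, so these matrices form a
commutative algebra in which multiplication, square roots and traces act coordinatewise on the
eigenvalues. Conjugation by `σ_z ⊗ I` swaps `γ₁ ↔ γ₂` and `γ₃ ↔ γ₄`, hence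
`√ρ σ √ρ` is Bell-diagonal with eigenvalues `γ₁γ₂, γ₁γ₂, γ₃γ₄, γ₃γ₄`, and the trace of its square
root is `2 (√(γ₁γ₂) + √(γ₃γ₄))`.
-/

open scoped MatrixOrder

section msqrt

variable {n : Type*} [Fintype n] [DecidableEq n]

theorem msqrt_eq_cfcSqrt {A : Matrix n n ℂ} (hA : A.PosSemidef) : msqrt A = CFC.sqrt A := by
  rw [msqrt, dif_pos hA, CFC.sqrt_eq_cfc, cfc_nnreal_eq_real _ A hA.nonneg, hA.1.cfc_eq,
    Matrix.IsHermitian.cfc, Unitary.conjStarAlgAut_apply]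
  congr 3
  funext i
  simp only [Function.comp_apply, Real.coe_sqrt, Real.coe_toNNReal _ (hA.eigenvalues_nonneg i)]
  rfl

theorem msqrt_eq_of_mul_self_eq {A B : Matrix n n ℂ} (hB : B.PosSemidef) (h : B * B = A) :
    msqrt A = B := by
  have hA : A.PosSemidef := by
    rw [← h]
    nth_rewrite 2 [← hB.1.eq]
    exact posSemidef_self_mul_conjTranspose B
  rw [msqrt_eq_cfcSqrt hA]
  exact CFC.sqrt_unique h hB.nonneg

end msqrt

section bellDiag

theorem bellDiag_mul_bellDiag (a b c d a' b' c' d' : ℝ) :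
    bellDiag a b c d * bellDiag a' b' c' d' = bellDiag (a * a') (b * b') (c * c') (d * d') := by
  ext ⟨i, j⟩ ⟨k, l⟩
  fin_cases i <;> fin_cases j <;> fin_cases k <;> fin_cases l <;>
    simp [bellDiag, Matrix.mul_apply, Fintype.sum_prod_type, finProdFinEquiv] <;> ring

theorem conjTranspose_bellDiag (a b c d : ℝ) : (bellDiag a b c d)ᴴ = bellDiag a b c d := by
  ext ⟨i, j⟩ ⟨k, l⟩
  fin_cases i <;> fin_cases j <;> fin_cases k <;> fin_cases l <;>
    simp [bellDiag, finProdFinEquiv]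

theorem posSemidef_bellDiag {a b c d : ℝ} (ha : 0 ≤ a) (hb : 0 ≤ b) (hc : 0 ≤ c) (hd : 0 ≤ d) :
    (bellDiag a b c d).PosSemidef := by
  have h := posSemidef_self_mul_conjTranspose (bellDiag √a √b √c √d)
  rwa [conjTranspose_bellDiag, bellDiag_mul_bellDiag, Real.mul_self_sqrt ha,
    Real.mul_self_sqrt hb, Real.mul_self_sqrt hc, Real.mul_self_sqrt hd] at h

theorem msqrt_bellDiag {a b c d : ℝ} (ha : 0 ≤ a) (hb : 0 ≤ b) (hc : 0 ≤ c) (hd : 0 ≤ d) :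
    msqrt (bellDiag a b c d) = bellDiag √a √b √c √d := by
  refine msqrt_eq_of_mul_self_eq (posSemidef_bellDiag (Real.sqrt_nonneg a) (Real.sqrt_nonneg b)
    (Real.sqrt_nonneg c) (Real.sqrt_nonneg d)) ?_
  rw [bellDiag_mul_bellDiag, Real.mul_self_sqrt ha, Real.mul_self_sqrt hb, Real.mul_self_sqrt hc,
    Real.mul_self_sqrt hd]

theorem re_trace_bellDiag (a b c d : ℝ) : (bellDiag a b c d).trace.re = a + b + c + d := by
  simp [bellDiag, Matrix.trace, Fintype.sum_prod_type, finProdFinEquiv]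
  ring

theorem sigmaZ_kronecker_one_conj_bellDiag (a b c d : ℝ) :
    (!![1, 0; 0, -1] ⊗ₖ (1 : Matrix (Fin 2) (Fin 2) ℂ)) * bellDiag a b c d *
        (!![1, 0; 0, -1] ⊗ₖ (1 : Matrix (Fin 2) (Fin 2) ℂ)) = bellDiag b a d c := by
  ext ⟨i, j⟩ ⟨k, l⟩
  fin_cases i <;> fin_cases j <;> fin_cases k <;> fin_cases l <;>
    simp [bellDiag, Matrix.mul_apply, Fintype.sum_prod_type, Matrix.one_apply, finProdFinEquiv]
      <;> ring

end bellDiag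

theorem sqrtFidelity_bellDiagonal_sigmaZ_general
    (γ₁ γ₂ γ₃ γ₄ : ℝ) (h1 : 0 ≤ γ₁) (h2 : 0 ≤ γ₂) (h3 : 0 ≤ γ₃) (h4 : 0 ≤ γ₄) :
    sqrtFid (bellDiag γ₁ γ₂ γ₃ γ₄)
        ((!![1, 0; 0, -1] ⊗ₖ (1 : Matrix (Fin 2) (Fin 2) ℂ)) * bellDiag γ₁ γ₂ γ₃ γ₄ *
          (!![1, 0; 0, -1] ⊗ₖ (1 : Matrix (Fin 2) (Fin 2) ℂ)))
      = 2 * (Real.sqrt (γ₁ * γ₂) + Real.sqrt (γ₃ * γ₄)) := by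
  have sqrt_mul_mul_sqrt {x : ℝ} (hx : 0 ≤ x) (y : ℝ) : √x * y * √x = x * y := by
    rw [mul_right_comm, Real.mul_self_sqrt hx]
  have hinner : msqrt (bellDiag γ₁ γ₂ γ₃ γ₄) * bellDiag γ₂ γ₁ γ₄ γ₃ * msqrt (bellDiag γ₁ γ₂ γ₃ γ₄)
      = bellDiag (γ₁ * γ₂) (γ₁ * γ₂) (γ₃ * γ₄) (γ₃ * γ₄) := by
    rw [msqrt_bellDiag h1 h2 h3 h4, bellDiag_mul_bellDiag, bellDiag_mul_bellDiag,
      sqrt_mul_mul_sqrt h1, sqrt_mul_mul_sqrt h2, sqrt_mul_mul_sqrt h3, sqrt_mul_mul_sqrt h4,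
      mul_comm γ₂, mul_comm γ₄]
  have h12 := mul_nonneg h1 h2
  have h34 := mul_nonneg h3 h4
  rw [sqrtFid, sigmaZ_kronecker_one_conj_bellDiag, hinner, msqrt_bellDiag h12 h12 h34 h34,
    re_trace_bellDiag]
  ring

theorem sqrtFidelity_bellDiagonal_sigmaZ
    (γ₁ γ₂ γ₃ γ₄ : ℝ) (h1 : 0 ≤ γ₁) (h2 : 0 ≤ γ₂) (h3 : 0 ≤ γ₃) (h4 : 0 ≤ γ₄)
    (hsum : γ₁ + γ₂ + γ₃ + γ₄ = 1) :
    sqrtFid (bellDiag γ₁ γ₂ γ₃ γ₄)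
        ((!![1, 0; 0, -1] ⊗ₖ (1 : Matrix (Fin 2) (Fin 2) ℂ)) * bellDiag γ₁ γ₂ γ₃ γ₄ *
          (!![1, 0; 0, -1] ⊗ₖ (1 : Matrix (Fin 2) (Fin 2) ℂ)))
      = 2 * (Real.sqrt (γ₁ * γ₂) + Real.sqrt (γ₃ * γ₄)) :=
  sqrtFidelity_bellDiagonal_sigmaZ_general γ₁ γ₂ γ₃ γ₄ h1 h2 h3 h4
end

section
/- Let d be a positive natural number and let φ be a unit vector in ℂ² ⊗ ℂ^d. Then there exists a traceless 2 × 2 unitary matrix U with |⟨φ, (U ⊗ₖ I_d) φ⟩| = 1 if and only if φ is a product vector, i.e., there exist a ∈ ℂ² and b ∈ ℂ^d with φ = a ⊗ₖ b. Equivalently, the entanglement of response E_R(φ) = 1 − max over traceless 2 × 2 unitaries U of |⟨φ, (U ⊗ₖ I_d)φ⟩|² vanishes exactly on product (fully separable) pure states. -/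
/-!
If `|⟨φ, (U ⊗ I) φ⟩| = 1` for a unitary `U`, equality in Cauchy–Schwarz makes `φ` an
eigenvector: `(U ⊗ I) φ = c φ` with `|c| = 1`. As `tr U = 0`, the matrix `U - c` is nonzero, and
a nonzero row `r` of it annihilates every column `(φ(0, j), φ(1, j))`; these columns therefore all
lie on the line `r^⊥` in `ℂ²`, which says that `φ` is a product vector. Conversely, for
`φ = a ⊗ b` the reflection `2 a a* / ‖a‖² - 1` across the line `ℂ a` is a traceless unitary that
fixes `φ`.
-/

open Matrix Kronecker ComplexOrder

namespace Matrix

theorem star_dotProduct_self_ne_zero {𝕜 n : Type*} [RCLike 𝕜] [Fintype n] {a : n → 𝕜}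
    (ha : a ≠ 0) : star a ⬝ᵥ a ≠ 0 :=
  dotProduct_star_self_eq_zero.not.2 ha

theorem eq_smul_of_norm_star_dotProduct_eq_one {𝕜 n : Type*} [RCLike 𝕜] [Fintype n]
    {u v : n → 𝕜} (hu : star u ⬝ᵥ u = 1) (hv : star v ⬝ᵥ v = 1) (h : ‖star u ⬝ᵥ v‖ = 1) :
    v = (star u ⬝ᵥ v) • u := by
  set c := star u ⬝ᵥ v
  have hcc : star c * c = 1 := by
    rw [RCLike.star_def, RCLike.conj_mul, h]
    norm_num
  have hvu : star v ⬝ᵥ u = star c := star_dotProduct v u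
  -- `‖v - c • u‖² = 1 - |c|² = 0`
  rw [← sub_eq_zero, ← dotProduct_star_self_eq_zero]
  simp only [star_sub, star_smul, sub_dotProduct, dotProduct_sub, smul_dotProduct,
    dotProduct_smul, hu, hv, hvu, smul_eq_mul]
  linear_combination -hcc

section Kronecker

variable {K ι κ l m : Type*}

theorem kronecker_mulVec_product [CommSemiring K] [Fintype ι] [Fintype κ]
    (A : Matrix l ι K) (B : Matrix m κ K) (x : ι → K) (y : κ → K) :
    (A ⊗ₖ B) *ᵥ (fun p => x p.1 * y p.2) = fun p => (A *ᵥ x) p.1 * (B *ᵥ y) p.2 := by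
  ext ⟨i, j⟩
  simp only [mulVec, dotProduct, kroneckerMap_apply, Fintype.sum_prod_type, Finset.sum_mul_sum]
  exact Finset.sum_congr rfl fun _ _ => Finset.sum_congr rfl fun _ _ => by ring

theorem exists_smul_of_dotProduct_eq_zero [Field K] {r x : Fin 2 → K} (hr : r ≠ 0)
    (hx : r ⬝ᵥ x = 0) : ∃ t : K, x = t • ![r 1, -r 0] := by
  simp only [dotProduct, Fin.sum_univ_two] at hx
  by_cases h0 : r 0 = 0
  · have h1 : r 1 ≠ 0 := fun h1 => hr (by ext i; fin_cases i <;> assumption)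
    refine ⟨x 0 / r 1, ?_⟩
    ext i; fin_cases i
    · simp [field]
    · simp [field]; linear_combination hx
  · refine ⟨-x 1 / r 0, ?_⟩
    ext i; fin_cases i
    · simp [field]; linear_combination hx
    · simp [field]

theorem exists_product_of_kronecker_one_mulVec_eq_zero [Field K] [Fintype κ] [DecidableEq κ]
    {A : Matrix l (Fin 2) K} (hA : A ≠ 0) {φ : Fin 2 × κ → K}
    (hφ : (A ⊗ₖ (1 : Matrix κ κ K)) *ᵥ φ = 0) :
    ∃ (a : Fin 2 → K) (b : κ → K), φ = fun p => a p.1 * b p.2 := by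
  obtain ⟨i, hi⟩ : ∃ i, A i ≠ 0 := by
    by_contra! h
    exact hA (funext h)
  have hrow : ∀ j, A i ⬝ᵥ (fun k => φ (k, j)) = 0 := fun j => by
    simpa [mulVec, dotProduct, Fintype.sum_prod_type, one_apply] using congrFun hφ (i, j)
  choose t ht using fun j => exists_smul_of_dotProduct_eq_zero hi (hrow j)
  refine ⟨![A i 1, -A i 0], t, ?_⟩
  ext ⟨k, j⟩
  simpa [mul_comm] using congrFun (ht j) k

theorem exists_product_of_kronecker_one_mulVec_eq_smul [Field K] [CharZero K] [Fintype κ]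
    [DecidableEq κ] {U : Matrix (Fin 2) (Fin 2) K} (hU : U.trace = 0) {c : K} (hc : c ≠ 0)
    {φ : Fin 2 × κ → K} (hφ : (U ⊗ₖ (1 : Matrix κ κ K)) *ᵥ φ = c • φ) :
    ∃ (a : Fin 2 → K) (b : κ → K), φ = fun p => a p.1 * b p.2 := by
  refine exists_product_of_kronecker_one_mulVec_eq_zero (A := U - c • 1) ?_ ?_
  · intro h
    simpa [trace_sub, hU, hc] using congrArg trace h
  · rw [sub_eq_add_neg, ← neg_smul, add_kronecker, smul_kronecker, one_kronecker_one, add_mulVec,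
      smul_mulVec, one_mulVec, hφ, neg_smul, add_neg_cancel]

end Kronecker

section LineReflection

variable {𝕜 n : Type*} [RCLike 𝕜] [Fintype n] [DecidableEq n]

-- `2 a a* / ‖a‖² - 1`, which is `-1` for `a = 0` because `0⁻¹ = 0`.
def lineReflection (a : n → 𝕜) : Matrix n n 𝕜 :=
  (2 * (star a ⬝ᵥ a)⁻¹) • vecMulVec a (star a) - 1

theorem conjTranspose_lineReflection (a : n → 𝕜) : (lineReflection a)ᴴ = lineReflection a := by
  have hs : starRingEnd 𝕜 (star a ⬝ᵥ a) = star a ⬝ᵥ a := (star_dotProduct a a).symm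
  simp [lineReflection, conjTranspose_smul, conjTranspose_vecMulVec, hs]

theorem lineReflection_mul_self (a : n → 𝕜) :
    lineReflection a * lineReflection a = 1 := by
  set s := star a ⬝ᵥ a
  have hsq : vecMulVec a (star a) * vecMulVec a (star a) = s • vecMulVec a (star a) := by
    rw [vecMulVec_mul_vecMulVec, vecMulVec_smul]
  have hcoeff : 2 * s⁻¹ * (2 * s⁻¹) * s = 2 * (2 * s⁻¹) := by
    have h := mul_inv_mul_cancel s⁻¹
    rw [inv_inv] at h
    linear_combination 4 * h
  simp only [lineReflection, sub_mul, mul_sub, smul_mul_smul_comm, hsq, smul_smul, mul_one,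
    one_mul]
  rw [hcoeff, mul_smul, two_smul]
  abel

theorem trace_lineReflection {a : n → 𝕜} (ha : a ≠ 0) :
    (lineReflection a).trace = 2 - Fintype.card n := by
  simp [lineReflection, trace_sub, trace_smul, trace_vecMulVec, dotProduct_comm a,
    star_dotProduct_self_ne_zero ha]

theorem lineReflection_mulVec_self {a : n → 𝕜} (ha : a ≠ 0) : lineReflection a *ᵥ a = a := by
  simp only [lineReflection, sub_mulVec, smul_mulVec, vecMulVec_mulVec, one_mulVec,
    op_smul_eq_smul]
  rw [smul_smul, inv_mul_cancel_right₀ (star_dotProduct_self_ne_zero ha), two_smul,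
    add_sub_cancel_right]

end LineReflection

end Matrix

theorem entanglement_of_response_vanishes_iff_product_general
    (d : ℕ) (φ : Fin 2 × Fin d → ℂ) (hφ : star φ ⬝ᵥ φ = 1) :
    (∃ U : Matrix (Fin 2) (Fin 2) ℂ, Uᴴ * U = 1 ∧ U.trace = 0 ∧
        ‖star φ ⬝ᵥ (U ⊗ₖ (1 : Matrix (Fin d) (Fin d) ℂ)).mulVec φ‖ = 1)
      ↔ ∃ (a : Fin 2 → ℂ) (b : Fin d → ℂ), φ = fun p => a p.1 * b p.2 := by
  constructor
  · rintro ⟨U, hU, htr, hnorm⟩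
    set M := U ⊗ₖ (1 : Matrix (Fin d) (Fin d) ℂ)
    have hM : star M * M = 1 :=
      Unitary.star_mul_self_of_mem <| kronecker_mem_unitary (mem_unitaryGroup_iff'.2 hU) (one_mem _)
    have hMφ : star (M *ᵥ φ) ⬝ᵥ (M *ᵥ φ) = 1 := by
      rw [star_mulVec, dotProduct_mulVec, vecMul_vecMul, ← star_eq_conjTranspose, hM, vecMul_one,
        hφ]
    have hc : star φ ⬝ᵥ M *ᵥ φ ≠ 0 := norm_ne_zero_iff.1 (hnorm ▸ one_ne_zero)
    exact exists_product_of_kronecker_one_mulVec_eq_smul htr hc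
      (eq_smul_of_norm_star_dotProduct_eq_one hφ hMφ hnorm)
  · rintro ⟨a, b, rfl⟩
    have ha : a ≠ 0 := by
      rintro rfl
      simp at hφ
    refine ⟨lineReflection a, ?_, ?_, ?_⟩
    · rw [conjTranspose_lineReflection, lineReflection_mul_self]
    · rw [trace_lineReflection ha, Fintype.card_fin, Nat.cast_ofNat, sub_self]
    · rw [kronecker_mulVec_product, lineReflection_mulVec_self ha, one_mulVec, hφ, norm_one]

theorem entanglement_of_response_vanishes_iff_product
    (d : ℕ) (hd : 0 < d) (φ : Fin 2 × Fin d → ℂ) (hφ : star φ ⬝ᵥ φ = 1) :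
    (∃ U : Matrix (Fin 2) (Fin 2) ℂ, Uᴴ * U = 1 ∧ U.trace = 0 ∧
        ‖star φ ⬝ᵥ (U ⊗ₖ (1 : Matrix (Fin d) (Fin d) ℂ)).mulVec φ‖ = 1)
      ↔ ∃ (a : Fin 2 → ℂ) (b : Fin d → ℂ), φ = fun p => a p.1 * b p.2 :=
  entanglement_of_response_vanishes_iff_product_general d φ hφ
end
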